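/- arXiv:0812.3960 — 5 statements merged into one kernel-verified Lean document; each statement's English description precedes it below -/
import Mathlib

section
/- Let K > 0 and 0 < τ₀ ≤ T. If a : [τ₀, T] → ℝ is differentiable and satisfies a′(τ) + a(τ)² ≤ K² for all τ ∈ [τ₀, T], and a(τ₀) ≤ K·coth(Kτ₀), then a(τ) ≤ K·coth(Kτ) for all τ ∈ [τ₀, T]. -/
/-!
`b(τ) = K coth(Kτ)` solves the Riccati equation `b' + b² = K²` and is positive for `τ > 0`.
A subsolution `a` of the same equation that starts below `b` stays below `b + ε` for every
`ε > 0`: at a first contact `a = b + ε` we would get `a' ≤ b' - 2εb - ε² < b'`, so `a` cannot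
cross the barrier.
-/

/-- Hyperbolic cotangent. -/
noncomputable def coth (x : ℝ) : ℝ := Real.cosh x / Real.sinh x

open Set

lemma coth_pos {x : ℝ} (hx : 0 < x) : 0 < coth x :=
  div_pos (Real.cosh_pos x) (Real.sinh_pos_iff.mpr hx)

lemma hasDerivAt_coth {x : ℝ} (hx : x ≠ 0) : HasDerivAt coth (1 - coth x ^ 2) x := by
  have hsinh : Real.sinh x ≠ 0 := Real.sinh_ne_zero.mpr hx
  refine ((Real.hasDerivAt_cosh x).div (Real.hasDerivAt_sinh x) hsinh).congr_deriv ?_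
  unfold coth
  field_simp

lemma hasDerivAt_const_mul_coth_const_mul {K t : ℝ} (hKt : K * t ≠ 0) :
    HasDerivAt (fun s => K * coth (K * s)) (K ^ 2 - (K * coth (K * t)) ^ 2) t := by
  have hlin : HasDerivAt (fun s : ℝ => K * s) K t := by
    simpa using (hasDerivAt_id t).const_mul K
  refine (((hasDerivAt_coth hKt).comp t hlin).const_mul K).congr_deriv ?_
  ring

theorem le_of_riccati_le_of_nonneg {a a' b b' : ℝ → ℝ} {t₀ T : ℝ}
    (ha : ∀ t ∈ Icc t₀ T, HasDerivWithinAt a (a' t) (Icc t₀ T) t)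
    (hb : ∀ t ∈ Icc t₀ T, HasDerivWithinAt b (b' t) (Icc t₀ T) t)
    (hriccati : ∀ t ∈ Icc t₀ T, a' t + a t ^ 2 ≤ b' t + b t ^ 2)
    (hb_nonneg : ∀ t ∈ Icc t₀ T, 0 ≤ b t) (hinit : a t₀ ≤ b t₀) :
    ∀ t ∈ Icc t₀ T, a t ≤ b t := by
  intro t ht
  refine le_of_forall_pos_le_add fun ε hε => ?_
  have hright : ∀ {f f' : ℝ → ℝ}, (∀ s ∈ Icc t₀ T, HasDerivWithinAt f (f' s) (Icc t₀ T) s) →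
      ∀ s ∈ Ico t₀ T, HasDerivWithinAt f (f' s) (Ici s) s := fun hf s hs =>
    (hf s (Ico_subset_Icc_self hs)).mono_of_mem_nhdsWithin (Icc_mem_nhdsGE_of_mem hs)
  refine image_le_of_deriv_right_lt_deriv_boundary' (B := fun s => b s + ε)
    (fun s hs => (ha s hs).continuousWithinAt) (hright ha) (by linarith)
    (fun s hs => (hb s hs).continuousWithinAt.add continuousWithinAt_const)
    (fun s hs => (hright hb s hs).add_const ε) ?_ ht
  intro s hs hcontact
  have hsI := Ico_subset_Icc_self hs
  have hsub := hriccati s hsI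
  rw [hcontact] at hsub
  nlinarith [hb_nonneg s hsI]

theorem stmt_2_general (K τ₀ T : ℝ) (hK : 0 < K) (hτ₀ : 0 < τ₀)
    (a a' : ℝ → ℝ)
    (hderiv : ∀ τ ∈ Set.Icc τ₀ T, HasDerivWithinAt a (a' τ) (Set.Icc τ₀ T) τ)
    (hriccati : ∀ τ ∈ Set.Icc τ₀ T, a' τ + (a τ) ^ 2 ≤ K ^ 2)
    (hinit : a τ₀ ≤ K * coth (K * τ₀)) :
    ∀ τ ∈ Set.Icc τ₀ T, a τ ≤ K * coth (K * τ) := by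
  have hKτ : ∀ τ ∈ Icc τ₀ T, 0 < K * τ := fun τ hτ => mul_pos hK (hτ₀.trans_le hτ.1)
  refine le_of_riccati_le_of_nonneg hderiv
    (fun τ hτ => (hasDerivAt_const_mul_coth_const_mul (hKτ τ hτ).ne').hasDerivWithinAt)
    (fun τ hτ => ?_) (fun τ hτ => (mul_pos hK (coth_pos (hKτ τ hτ))).le) hinit
  simpa using hriccati τ hτ

/-- Riccati comparison: if `a` is differentiable on `[τ₀, T]` (with `0 < τ₀ ≤ T`) and satisfies
`a′(τ) + a(τ)² ≤ K²` there, and `a(τ₀) ≤ K·coth(Kτ₀)`, then `a(τ) ≤ K·coth(Kτ)` on `[τ₀, T]`. -/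
theorem stmt_2 (K τ₀ T : ℝ) (hK : 0 < K) (hτ₀ : 0 < τ₀) (hT : τ₀ ≤ T)
    (a a' : ℝ → ℝ)
    (hderiv : ∀ τ ∈ Set.Icc τ₀ T, HasDerivWithinAt a (a' τ) (Set.Icc τ₀ T) τ)
    (hriccati : ∀ τ ∈ Set.Icc τ₀ T, a' τ + (a τ) ^ 2 ≤ K ^ 2)
    (hinit : a τ₀ ≤ K * coth (K * τ₀)) :
    ∀ τ ∈ Set.Icc τ₀ T, a τ ≤ K * coth (K * τ) :=
  stmt_2_general K τ₀ T hK hτ₀ a a' hderiv hriccati hinit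
end

section
/- Let K > 0 and 0 < τ₀ ≤ T < π/K. If a : [τ₀, T] → ℝ is differentiable and satisfies a′(τ) + a(τ)² ≥ −K² for all τ ∈ [τ₀, T], and a(τ₀) ≥ K·cot(Kτ₀), then a(τ) ≥ K·cot(Kτ) for all τ ∈ [τ₀, T]. -/
/-!
`k(τ) = K cot(Kτ)` solves the Riccati equation `k' + k² = -K²` exactly. For any `a` with
`a' + a² ≥ k' + k²`, the difference `a - k` satisfies the linear inequality
`(a - k)' ≥ -(a + k)(a - k)`, and `a + k` is bounded below on the compact interval.
A linear differential inequality with coefficient bounded above preserves nonnegativity: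
`-(a - k)` can never cross the barrier `ε e^{(L+1)(τ - τ₀)}`, and `ε → 0`.
-/

open Set Real

theorem Real.hasDerivAt_cot {x : ℝ} (hx : sin x ≠ 0) :
    HasDerivAt cot (-(1 + cot x ^ 2)) x := by
  have hquot := (hasDerivAt_cos x).div (hasDerivAt_sin x) hx
  have hval : (-sin x * sin x - cos x * cos x) / sin x ^ 2 = -(1 + cot x ^ 2) := by
    rw [cot_eq_cos_div_sin]
    field_simp
    ring
  rw [hval] at hquot
  refine hquot.congr_of_eventuallyEq ?_
  filter_upwards [continuous_sin.continuousAt.eventually_ne hx] with y _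
  exact cot_eq_cos_div_sin y

theorem Real.hasDerivAt_mul_cot_mul (K : ℝ) {x : ℝ} (hx : sin (K * x) ≠ 0) :
    HasDerivAt (fun t => K * cot (K * t)) (-(K ^ 2 + (K * cot (K * x)) ^ 2)) x :=
  ((Real.hasDerivAt_cot hx).comp x ((hasDerivAt_id x).const_mul K)).const_mul K
    |>.congr_deriv (by ring)

theorem nonneg_of_deriv_ge_mul {d d' c : ℝ → ℝ} {a b L : ℝ}
    (hd : ∀ x ∈ Icc a b, HasDerivWithinAt d (d' x) (Icc a b) x)
    (hdc : ∀ x ∈ Ico a b, c x * d x ≤ d' x) (hc : ∀ x ∈ Ico a b, c x ≤ L)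
    (ha : 0 ≤ d a) : ∀ x ∈ Icc a b, 0 ≤ d x := by
  have fence : ∀ ε > 0, ∀ x ∈ Icc a b, -d x ≤ ε * exp ((L + 1) * (x - a)) := by
    intro ε hε
    have hB : ∀ x, HasDerivAt (fun t => ε * exp ((L + 1) * (t - a)))
        ((L + 1) * (ε * exp ((L + 1) * (x - a)))) x := fun x =>
      ((((hasDerivAt_id x).sub_const a).const_mul (L + 1)).exp.const_mul ε).congr_deriv
        (by simp only [id]; ring)
    refine image_le_of_deriv_right_lt_deriv_boundary' (f := fun x => -d x) (f' := fun x => -d' x)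
      (fun x hx => (hd x hx).continuousWithinAt.neg)
      (fun x hx => ((hd x (Ico_subset_Icc_self hx)).mono_of_mem_nhdsWithin
        (Icc_mem_nhdsGE_of_mem hx)).neg) ?_
      (fun x _ => (hB x).continuousAt.continuousWithinAt)
      (fun x _ => (hB x).hasDerivWithinAt) ?_
    · simp only [sub_self, mul_zero, exp_zero, mul_one]; linarith
    · intro x hx hfB
      have hpos : 0 < -d x := by rw [hfB]; positivity
      rw [← hfB]
      linarith [hdc x hx, mul_le_mul_of_nonneg_right (hc x hx) hpos.le]
  intro x hx
  have hE := exp_pos ((L + 1) * (x - a))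
  refine neg_nonpos.mp (le_of_forall_pos_le_add fun ε hε => ?_)
  simpa [div_mul_cancel₀ _ hE.ne'] using fence (ε / exp ((L + 1) * (x - a))) (by positivity) x hx

theorem le_of_deriv_add_sq_le {a a' k k' : ℝ → ℝ} {τ₀ T : ℝ}
    (ha : ∀ τ ∈ Icc τ₀ T, HasDerivWithinAt a (a' τ) (Icc τ₀ T) τ)
    (hk : ∀ τ ∈ Icc τ₀ T, HasDerivWithinAt k (k' τ) (Icc τ₀ T) τ)
    (hric : ∀ τ ∈ Icc τ₀ T, k' τ + k τ ^ 2 ≤ a' τ + a τ ^ 2)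
    (hinit : k τ₀ ≤ a τ₀) : ∀ τ ∈ Icc τ₀ T, k τ ≤ a τ := by
  have hsum : ContinuousOn (fun τ => a τ + k τ) (Icc τ₀ T) := fun τ hτ =>
    (ha τ hτ).continuousWithinAt.add (hk τ hτ).continuousWithinAt
  obtain ⟨m, hm⟩ := isCompact_Icc.bddBelow_image hsum
  have hdiff := nonneg_of_deriv_ge_mul (d := fun τ => a τ - k τ) (c := fun τ => -(a τ + k τ))
    (L := -m) (fun τ hτ => (ha τ hτ).sub (hk τ hτ))
    (fun τ hτ => by linarith [hric τ (Ico_subset_Icc_self hτ)])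
    (fun τ hτ => neg_le_neg (hm ⟨τ, Ico_subset_Icc_self hτ, rfl⟩)) (sub_nonneg.mpr hinit)
  exact fun τ hτ => sub_nonneg.mp (hdiff τ hτ)

theorem stmt_3_general (K τ₀ T : ℝ) (hK : 0 < K) (hτ₀ : 0 < τ₀)
    (hTπ : T < Real.pi / K)
    (a a' : ℝ → ℝ)
    (hderiv : ∀ τ ∈ Set.Icc τ₀ T, HasDerivWithinAt a (a' τ) (Set.Icc τ₀ T) τ)
    (hriccati : ∀ τ ∈ Set.Icc τ₀ T, -K ^ 2 ≤ a' τ + (a τ) ^ 2)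
    (hinit : K * Real.cot (K * τ₀) ≤ a τ₀) :
    ∀ τ ∈ Set.Icc τ₀ T, K * Real.cot (K * τ) ≤ a τ := by
  have hKT : K * T < π := (lt_div_iff₀' hK).mp hTπ
  have hsin : ∀ τ ∈ Icc τ₀ T, sin (K * τ) ≠ 0 := fun τ hτ =>
    (sin_pos_of_pos_of_lt_pi (by nlinarith [hτ.1]) (by nlinarith [hτ.2])).ne'
  exact le_of_deriv_add_sq_le hderiv
    (fun τ hτ => (hasDerivAt_mul_cot_mul K (hsin τ hτ)).hasDerivWithinAt)
    (fun τ hτ => by linarith [hriccati τ hτ]) hinit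

/-- Riccati comparison from below: if `a` is differentiable on `[τ₀, T]`
(with `0 < τ₀ ≤ T < π/K`) and satisfies `a′(τ) + a(τ)² ≥ −K²` there, and
`a(τ₀) ≥ K·cot(Kτ₀)`, then `a(τ) ≥ K·cot(Kτ)` on `[τ₀, T]`. -/
theorem stmt_3 (K τ₀ T : ℝ) (hK : 0 < K) (hτ₀ : 0 < τ₀) (hT : τ₀ ≤ T)
    (hTπ : T < Real.pi / K)
    (a a' : ℝ → ℝ)
    (hderiv : ∀ τ ∈ Set.Icc τ₀ T, HasDerivWithinAt a (a' τ) (Set.Icc τ₀ T) τ)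
    (hriccati : ∀ τ ∈ Set.Icc τ₀ T, -K ^ 2 ≤ a' τ + (a τ) ^ 2)
    (hinit : K * Real.cot (K * τ₀) ≤ a τ₀) :
    ∀ τ ∈ Set.Icc τ₀ T, K * Real.cot (K * τ) ≤ a τ :=
  stmt_3_general K τ₀ T hK hτ₀ hTπ a a' hderiv hriccati hinit
end

section
/- Let (X, μ) be a finite measure space, f : X → [0, ∞) measurable, χ > 1, p₀ ≥ 1, and C ≥ 1. Set p_k = p₀·χ^k for k ∈ ℕ, and suppose f ∈ L^{p₀}(μ) and that for every k ∈ ℕ one has ‖f‖_{L^{p_{k+1}}(μ)} ≤ (C·p_k²)^{1/p_k}·‖f‖_{L^{p_k}(μ)}. Then f is essentially bounded and ess sup f ≤ exp( Σ_{k=0}^∞ p_k^{-1}·log(C·p_k²) ) · ‖f‖_{L^{p₀}(μ)}, the series being convergent. -/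
/-!
Chebyshev's inequality gives `b · μ{b ≤ f}^{1/q} ≤ ‖f‖_{L^q}` for every `q > 0`; since
`μ{b ≤ f}^{1/q} → 1` as `q → ∞` (or stays `∞`), a uniform bound on the `L^{p_k}` norms along
exponents `p_k → ∞` bounds the essential supremum. Iterating the hypothesis gives the uniform
bound `‖f‖_{L^{p_k}} ≤ exp(Σ_{j<k} p_j⁻¹ log(C p_j²)) ‖f‖_{L^{p₀}}`, and the series converges
because its terms are `O(k χ^{-k})`.
-/

open MeasureTheory Filter Real
open scoped ENNReal NNReal Topology

lemma ENNReal.tendsto_const_rpow_of_tendsto_zero {ι : Type*} {l : Filter ι} {x : ℝ≥0∞}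
    (hx₀ : x ≠ 0) (hx : x ≠ ∞) {y : ι → ℝ} (hy : Tendsto y l (𝓝 0)) :
    Tendsto (fun i => x ^ y i) l (𝓝 1) := by
  lift x to ℝ≥0 using hx
  have hx₀' : x ≠ 0 := by exact_mod_cast hx₀
  have h := (tendsto_const_nhds (x := x)).nnrpow hy (Or.inl hx₀')
  rw [NNReal.rpow_zero] at h
  simpa only [ENNReal.coe_rpow_of_ne_zero hx₀', ENNReal.coe_one] using ENNReal.tendsto_coe.2 h

section EssSup

variable {X : Type*} [MeasurableSpace X] {μ : Measure X} {g : X → ℝ≥0∞}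

lemma mul_measure_rpow_le_lintegral_rpow (hg : AEMeasurable g μ) (b : ℝ≥0∞) {q : ℝ}
    (hq : 0 < q) :
    b * μ {x | b ≤ g x} ^ (1 / q) ≤ (∫⁻ x, g x ^ q ∂μ) ^ (1 / q) := by
  have hmarkov : b ^ q * μ {x | b ^ q ≤ g x ^ q} ≤ ∫⁻ x, g x ^ q ∂μ :=
    mul_meas_ge_le_lintegral₀ (hg.pow_const q) _
  simp only [ENNReal.rpow_le_rpow_iff hq] at hmarkov
  calc b * μ {x | b ≤ g x} ^ (1 / q)
      = (b ^ q * μ {x | b ≤ g x}) ^ (1 / q) := by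
        rw [ENNReal.mul_rpow_of_nonneg _ _ (by positivity), one_div,
          ENNReal.rpow_rpow_inv hq.ne']
    _ ≤ _ := by gcongr

variable {ι : Type*} {l : Filter ι} [l.NeBot] {q : ι → ℝ} {M : ℝ≥0∞}

lemma measure_le_eq_zero_of_lintegral_rpow_le (hg : AEMeasurable g μ)
    (hq : Tendsto q l atTop) (hbound : ∀ i, (∫⁻ x, g x ^ q i ∂μ) ^ (1 / q i) ≤ M)
    {b : ℝ≥0∞} (hMb : M < b) : μ {x | b ≤ g x} = 0 := by
  by_contra hS
  have hq_pos : ∀ᶠ i in l, 0 < q i := hq.eventually_gt_atTop 0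
  have hle : ∀ᶠ i in l, b * μ {x | b ≤ g x} ^ (1 / q i) ≤ M := hq_pos.mono fun i hi =>
    (mul_measure_rpow_le_lintegral_rpow hg b hi).trans (hbound i)
  by_cases hS_top : μ {x | b ≤ g x} = ∞
  · obtain ⟨i, hi_pos, hi⟩ := (hq_pos.and hle).exists
    rw [hS_top, ENNReal.top_rpow_of_pos (by positivity),
      ENNReal.mul_top (ne_bot_of_gt hMb)] at hi
    exact hMb.not_ge (le_top.trans hi)
  · have hlim : Tendsto (fun i => b * μ {x | b ≤ g x} ^ (1 / q i)) l (𝓝 b) := by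
      simpa using ENNReal.Tendsto.const_mul
        (ENNReal.tendsto_const_rpow_of_tendsto_zero hS hS_top
          (hq.inv_tendsto_atTop.congr fun i => (one_div (q i)).symm)) (Or.inl one_ne_zero)
    exact hMb.not_ge (le_of_tendsto hlim hle)

theorem essSup_le_of_lintegral_rpow_le (hg : AEMeasurable g μ) (hq : Tendsto q l atTop)
    (hbound : ∀ i, (∫⁻ x, g x ^ q i ∂μ) ^ (1 / q i) ≤ M) : essSup g μ ≤ M := by
  refine le_of_forall_gt_imp_ge_of_dense fun b hMb => essSup_le_of_ae_le b ?_
  have hlt : ∀ᵐ x ∂μ, g x < b := ae_iff.2 <| by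
    simpa only [not_lt] using measure_le_eq_zero_of_lintegral_rpow_le hg hq hbound hMb
  exact hlt.mono fun x hx => hx.le

end EssSup

lemma le_ofReal_exp_sum_mul_of_le_ofReal_exp_mul {A : ℕ → ℝ≥0∞} {s : ℕ → ℝ}
    (h : ∀ k, A (k + 1) ≤ ENNReal.ofReal (exp (s k)) * A k) (k : ℕ) :
    A k ≤ ENNReal.ofReal (exp (∑ j ∈ Finset.range k, s j)) * A 0 := by
  induction k with
  | zero => simp
  | succ k ih =>
    calc A (k + 1) ≤ ENNReal.ofReal (exp (s k)) * A k := h k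
      _ ≤ ENNReal.ofReal (exp (s k)) *
          (ENNReal.ofReal (exp (∑ j ∈ Finset.range k, s j)) * A 0) := by gcongr
      _ = ENNReal.ofReal (exp (∑ j ∈ Finset.range (k + 1), s j)) * A 0 := by
        rw [← mul_assoc, ← ENNReal.ofReal_mul (exp_nonneg _), ← exp_add,
          Finset.sum_range_succ, add_comm]

lemma le_ofReal_exp_tsum_mul_of_le_ofReal_exp_mul {A : ℕ → ℝ≥0∞} {s : ℕ → ℝ}
    (hs₀ : ∀ k, 0 ≤ s k) (hs : Summable s)
    (h : ∀ k, A (k + 1) ≤ ENNReal.ofReal (exp (s k)) * A k) (k : ℕ) :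
    A k ≤ ENNReal.ofReal (exp (∑' j, s j)) * A 0 := by
  refine (le_ofReal_exp_sum_mul_of_le_ofReal_exp_mul h k).trans ?_
  gcongr
  exact hs.sum_le_tsum _ fun j _ => hs₀ j

lemma summable_one_div_mul_log_mul_sq_geometric {p₀ χ C : ℝ} (hp₀ : p₀ ≠ 0)
    (hχ : 1 < χ) (hC : C ≠ 0) :
    Summable fun k : ℕ => 1 / (p₀ * χ ^ k) * log (C * (p₀ * χ ^ k) ^ 2) := by
  have hχ₀ : χ ≠ 0 := by positivity
  have hr : ‖χ⁻¹‖ < 1 := by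
    rw [norm_inv, Real.norm_of_nonneg (by positivity)]
    exact inv_lt_one_of_one_lt₀ hχ
  have hterm : ∀ k : ℕ, 1 / (p₀ * χ ^ k) * log (C * (p₀ * χ ^ k) ^ 2) =
      (log C + 2 * log p₀) / p₀ * χ⁻¹ ^ k + 2 * log χ / p₀ * ((k : ℝ) ^ 1 * χ⁻¹ ^ k) := by
    intro k
    rw [log_mul hC (by positivity), log_pow, log_mul hp₀ (by positivity), log_pow,
      inv_pow]
    field_simp
    ring
  simp only [hterm]
  exact ((summable_geometric_of_norm_lt_one hr).mul_left _).add
    ((summable_pow_mul_geometric_of_norm_lt_one 1 hr).mul_left _)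

theorem stmt_13_general {X : Type*} [MeasurableSpace X] (μ : Measure X)
    (f : X → ℝ) (hf : Measurable f)
    (χ p₀ C : ℝ) (hχ : 1 < χ) (hp₀ : 1 ≤ p₀) (hC : 1 ≤ C)
    (p : ℕ → ℝ) (hp : ∀ k, p k = p₀ * χ ^ k)
    (hiter : ∀ k,
      (∫⁻ x, ENNReal.ofReal (f x) ^ p (k + 1) ∂μ) ^ (1 / p (k + 1)) ≤
        ENNReal.ofReal ((C * p k ^ 2) ^ (1 / p k)) *
          (∫⁻ x, ENNReal.ofReal (f x) ^ p k ∂μ) ^ (1 / p k)) :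
    Summable (fun k => (1 / p k) * Real.log (C * p k ^ 2)) ∧
    essSup (fun x => ENNReal.ofReal (f x)) μ ≤
      ENNReal.ofReal (Real.exp (∑' k, (1 / p k) * Real.log (C * p k ^ 2))) *
        (∫⁻ x, ENNReal.ofReal (f x) ^ p₀ ∂μ) ^ (1 / p₀) := by
  have hp_one : ∀ k, 1 ≤ p k := fun k =>
    hp k ▸ one_le_mul_of_one_le_of_one_le hp₀ (one_le_pow₀ hχ.le)
  have hp_pos : ∀ k, 0 < p k := fun k => zero_lt_one.trans_le (hp_one k)
  have hCp : ∀ k, 1 ≤ C * p k ^ 2 := fun k =>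
    one_le_mul_of_one_le_of_one_le hC (one_le_pow₀ (hp_one k))
  have hsum : Summable fun k => 1 / p k * log (C * p k ^ 2) := by
    obtain rfl : p = fun k => p₀ * χ ^ k := funext hp
    exact summable_one_div_mul_log_mul_sq_geometric (by positivity) hχ (by positivity)
  have hp_tendsto : Tendsto p atTop atTop := by
    refine Tendsto.congr (fun k => (hp k).symm) ?_
    exact (tendsto_pow_atTop_atTop_of_one_lt hχ).const_mul_atTop (by positivity)
  have hp_zero : p 0 = p₀ := by simp [hp]
  refine ⟨hsum, essSup_le_of_lintegral_rpow_le hf.ennreal_ofReal.aemeasurable hp_tendsto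
    fun k => ?_⟩
  rw [← hp_zero]
  refine le_ofReal_exp_tsum_mul_of_le_ofReal_exp_mul
    (A := fun k => (∫⁻ x, ENNReal.ofReal (f x) ^ p k ∂μ) ^ (1 / p k))
    (fun k => mul_nonneg (one_div_nonneg.2 (hp_pos k).le) (log_nonneg (hCp k))) hsum
    (fun k => ?_) k
  simpa only [rpow_def_of_pos (zero_lt_one.trans_le (hCp k)), mul_comm (log _)] using hiter k

/-- Abstract Nash–Moser iteration: on a finite measure space, if a nonnegative measurable
function `f` lies in `L^{p₀}` and satisfies the iterative norm bounds
`‖f‖_{L^{p_{k+1}}} ≤ (C p_k²)^{1/p_k} ‖f‖_{L^{p_k}}` along the exponents `p_k = p₀ χ^k`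
(with `χ > 1`, `p₀ ≥ 1`, `C ≥ 1`), then the series `Σ p_k⁻¹ log(C p_k²)` converges and
`ess sup f ≤ exp(Σ_k p_k⁻¹ log(C p_k²)) · ‖f‖_{L^{p₀}}`. -/
theorem stmt_13 {X : Type*} [MeasurableSpace X] (μ : Measure X) [IsFiniteMeasure μ]
    (f : X → ℝ) (hf : Measurable f) (hf0 : ∀ x, 0 ≤ f x)
    (χ p₀ C : ℝ) (hχ : 1 < χ) (hp₀ : 1 ≤ p₀) (hC : 1 ≤ C)
    (p : ℕ → ℝ) (hp : ∀ k, p k = p₀ * χ ^ k)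
    (hmem : (∫⁻ x, ENNReal.ofReal (f x) ^ p₀ ∂μ) < ⊤)
    (hiter : ∀ k,
      (∫⁻ x, ENNReal.ofReal (f x) ^ p (k + 1) ∂μ) ^ (1 / p (k + 1)) ≤
        ENNReal.ofReal ((C * p k ^ 2) ^ (1 / p k)) *
          (∫⁻ x, ENNReal.ofReal (f x) ^ p k ∂μ) ^ (1 / p k)) :
    Summable (fun k => (1 / p k) * Real.log (C * p k ^ 2)) ∧
    essSup (fun x => ENNReal.ofReal (f x)) μ ≤
      ENNReal.ofReal (Real.exp (∑' k, (1 / p k) * Real.log (C * p k ^ 2))) *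
        (∫⁻ x, ENNReal.ofReal (f x) ^ p₀ ∂μ) ^ (1 / p₀) :=
  stmt_13_general μ f hf χ p₀ C hχ hp₀ hC p hp hiter
end

section
/- Let n ≥ 2, χ = n/(n−1), q > 0, δ ∈ (0, 1], C ≥ 1, and set q_i = q·χ^i. Let (X, μ) be a measure space, (A_i)_{i∈ℕ} a decreasing sequence of measurable sets with μ(A_0) < ∞, and A_∞ ⊆ ∩_i A_i measurable. Let f : X → [0, ∞) be measurable with f·1_{A_0} ∈ L^q(μ), and suppose that for every i ∈ ℕ one has ‖f·1_{A_{i+1}}‖_{L^{q_{i+1}}(μ)} ≤ (2^i·C·q_i²·δ^{-1})^{1/q_i}·‖f·1_{A_i}‖_{L^{q_i}(μ)}. Then f is essentially bounded on A_∞ and ess sup_{A_∞} f ≤ C′·δ^{−n/q}·‖f·1_{A_0}‖_{L^q(μ)}, where C′ = exp( Σ_{i=0}^∞ q_i^{-1}·log(2^i·C·q_i²) ) depends only on n, q, and C (in particular Σ_i q_i^{-1} = n/q, which produces the factor δ^{−n/q}). -/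
/-!
Chaining the reverse Hölder steps gives
`‖f‖_{L^{q_k}(A_k)} ≤ ∏_{i<k} (2^i C q_i² δ⁻¹)^{1/q_i} ‖f‖_{L^q(A_0)}`. The logarithm of the product
is `∑_{i<k} q_i⁻¹ log (2^i C q_i²) + (∑_{i<k} q_i⁻¹) log δ⁻¹`, and both series converge because
`q_i⁻¹ = q⁻¹ χ⁻ⁱ` decays geometrically while `log (2^i C q_i²)` grows linearly in `i`; moreover
`∑ q_i⁻¹ = n/q`. Since `q_k → ∞` and `A_∞ ⊆ A_k`, Chebyshev's inequality
`a μ{f > a}^{1/p} ≤ ‖f‖_{L^p}` bounds the essential supremum on `A_∞` by the limit of these norms.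
-/

open MeasureTheory Filter Topology Finset
open scoped ENNReal

theorem ENNReal.tendsto_const_rpow_nhds_one {m : ℝ≥0∞} (hm0 : m ≠ 0) (hm : m ≠ ⊤) {e : ℕ → ℝ}
    (he : Tendsto e atTop (𝓝 0)) :
    Tendsto (fun k => m ^ e k) atTop (𝓝 1) := by
  have hm_pos : 0 < m.toReal := ENNReal.toReal_pos hm0 hm
  have hreal : Tendsto (fun k => m.toReal ^ e k) atTop (𝓝 1) := by
    simpa [Function.comp_def] using ((Real.continuous_const_rpow hm_pos.ne').tendsto 0).comp he
  convert (ENNReal.continuous_ofReal.tendsto 1).comp hreal using 1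
  · ext k
    simp [Function.comp, ← ENNReal.ofReal_rpow_of_pos hm_pos, ENNReal.ofReal_toReal hm]
  · simp

section
variable {X : Type*} [MeasurableSpace X] {μ : Measure X}

theorem mul_measure_lt_rpow_le_lintegral_rpow {g : X → ℝ≥0∞} (hg : AEMeasurable g μ) (a : ℝ≥0∞)
    {p : ℝ} (hp : 0 < p) :
    a * μ {x | a < g x} ^ (1 / p) ≤ (∫⁻ x, g x ^ p ∂μ) ^ (1 / p) := by
  have hmarkov : a ^ p * μ {x | a < g x} ≤ ∫⁻ x, g x ^ p ∂μ :=
    (mul_le_mul_right (measure_mono fun x hx => ENNReal.rpow_le_rpow (le_of_lt hx) hp.le) _).trans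
      (mul_meas_ge_le_lintegral₀ (hg.pow_const p) _)
  calc a * μ {x | a < g x} ^ (1 / p) = (a ^ p * μ {x | a < g x}) ^ (1 / p) := by
        rw [ENNReal.mul_rpow_of_nonneg _ _ (by positivity), ← ENNReal.rpow_mul,
          mul_one_div_cancel hp.ne', ENNReal.rpow_one]
    _ ≤ _ := ENNReal.rpow_le_rpow hmarkov (by positivity)

theorem essSup_le_liminf_lintegral_rpow {g : X → ℝ≥0∞} (hg : AEMeasurable g μ) {p : ℕ → ℝ}
    (hp : ∀ k, 0 < p k) (hp_inv : Tendsto (fun k => 1 / p k) atTop (𝓝 0)) :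
    essSup g μ ≤ liminf (fun k => (∫⁻ x, g x ^ p k ∂μ) ^ (1 / p k)) atTop := by
  refine le_of_forall_lt_imp_le_of_dense fun a ha => ?_
  have hμ : μ {x | a < g x} ≠ 0 := fun h0 =>
    (essSup_le_of_ae_le a (ae_iff.2 (by simpa only [not_le] using h0))).not_gt ha
  -- truncating the measure at 1 keeps it nonzero and makes it finite
  set m := min (μ {x | a < g x}) 1
  have hlow : ∀ k, a * m ^ (1 / p k) ≤ (∫⁻ x, g x ^ p k ∂μ) ^ (1 / p k) := fun k =>
    (mul_le_mul_right (ENNReal.rpow_le_rpow (min_le_left _ _) (one_div_nonneg.2 (hp k).le)) _).trans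
      (mul_measure_lt_rpow_le_lintegral_rpow hg a (hp k))
  have hlim : Tendsto (fun k => a * m ^ (1 / p k)) atTop (𝓝 a) := by
    simpa using ENNReal.Tendsto.const_mul (ENNReal.tendsto_const_rpow_nhds_one
      (by simp [m, hμ]) (by simp [m]) hp_inv) (Or.inl one_ne_zero)
  calc a = liminf (fun k => a * m ^ (1 / p k)) atTop := hlim.liminf_eq.symm
    _ ≤ _ := liminf_le_liminf (Eventually.of_forall hlow)

end

theorem ENNReal.le_prod_range_mul_of_le_mul {L b : ℕ → ℝ≥0∞} (h : ∀ i, L (i + 1) ≤ b i * L i)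
    (k : ℕ) : L k ≤ (∏ i ∈ range k, b i) * L 0 := by
  induction k with
  | zero => simp
  | succ k ih =>
    calc L (k + 1) ≤ b k * L k := h k
      _ ≤ b k * ((∏ i ∈ range k, b i) * L 0) := mul_le_mul_right ih _
      _ = (∏ i ∈ range (k + 1), b i) * L 0 := by rw [prod_range_succ]; ring

theorem ENNReal.tendsto_prod_range_ofReal_of_hasSum_log {y : ℕ → ℝ} (hy : ∀ i, 0 < y i) {s : ℝ}
    (h : HasSum (fun i => Real.log (y i)) s) :
    Tendsto (fun k => ∏ i ∈ range k, ENNReal.ofReal (y i)) atTop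
      (𝓝 (ENNReal.ofReal (Real.exp s))) := by
  refine ((ENNReal.continuous_ofReal.tendsto _).comp
    (Real.hasProd_of_hasSum_log hy h).tendsto_prod_nat).congr fun k => ?_
  simp [Function.comp, ENNReal.ofReal_prod_of_nonneg fun i _ => (hy i).le]

theorem ENNReal.tendsto_prod_range_ofReal_rpow_mul_inv {x p : ℕ → ℝ} (hx : ∀ i, 0 < x i)
    {s t δ : ℝ} (hs : HasSum (fun i => 1 / p i * Real.log (x i)) s)
    (ht : HasSum (fun i => 1 / p i) t) (hδ : 0 < δ) :
    Tendsto (fun k => ∏ i ∈ range k, ENNReal.ofReal ((x i * δ⁻¹) ^ (1 / p i))) atTop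
      (𝓝 (ENNReal.ofReal (Real.exp s) * ENNReal.ofReal (δ ^ (-t)))) := by
  have hlog : HasSum (fun i => Real.log ((x i * δ⁻¹) ^ (1 / p i))) (s + t * Real.log δ⁻¹) := by
    refine (hs.add (ht.mul_right (Real.log δ⁻¹))).congr_fun fun i => ?_
    have := hx i
    rw [Real.log_rpow (by positivity), Real.log_mul (by positivity) (by positivity)]
    ring
  convert ENNReal.tendsto_prod_range_ofReal_of_hasSum_log
    (fun i => by have := hx i; positivity) hlog using 2
  rw [Real.exp_add, ENNReal.ofReal_mul (Real.exp_nonneg _), Real.rpow_def_of_pos hδ, Real.log_inv]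
  ring_nf

theorem hasSum_one_div_mul_pow (q : ℝ) {χ : ℝ} (hχ : 1 < χ) :
    HasSum (fun i : ℕ => 1 / (q * χ ^ i)) (χ / (q * (χ - 1))) := by
  have hgeom := (hasSum_geometric_of_lt_one (by positivity) (inv_lt_one_of_one_lt₀ hχ)).mul_left q⁻¹
  have hsum : q⁻¹ * (1 - χ⁻¹)⁻¹ = χ / (q * (χ - 1)) := by
    have : χ - 1 ≠ 0 := by linarith
    rw [show 1 - χ⁻¹ = (χ - 1) / χ by field_simp, inv_div, div_eq_mul_inv, div_eq_mul_inv, mul_inv]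
    ring
  have hterm : (fun i : ℕ => 1 / (q * χ ^ i)) = fun i => q⁻¹ * χ⁻¹ ^ i := by
    funext i; rw [one_div, mul_inv, inv_pow]
  rw [hterm, ← hsum]
  exact hgeom

theorem summable_one_div_mul_pow_mul_log {q χ : ℝ} (hq : 0 < q) (hχ : 1 < χ) {b C : ℝ} (hb : 0 < b)
    (hC : 0 < C) :
    Summable (fun i : ℕ => 1 / (q * χ ^ i) * Real.log (b ^ i * C * (q * χ ^ i) ^ 2)) := by
  have hr : ‖χ⁻¹‖ < 1 := by
    rw [Real.norm_eq_abs, abs_of_pos (by positivity)]; exact inv_lt_one_of_one_lt₀ hχ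
  have hlin := summable_pow_mul_geometric_of_norm_lt_one 1 hr
  have hgeom := summable_geometric_of_norm_lt_one hr
  refine (((hlin.mul_right (Real.log b + 2 * Real.log χ)).add
    (hgeom.mul_right (Real.log C + 2 * Real.log q))).mul_left q⁻¹).congr fun i => ?_
  have hχ0 : 0 < χ := by linarith
  rw [Real.log_mul (by positivity) (by positivity), Real.log_mul (by positivity) hC.ne',
    Real.log_pow, Real.log_pow, Real.log_mul hq.ne' (by positivity), Real.log_pow]
  simp only [pow_one, mul_inv, inv_pow, one_div]
  ring

theorem stmt_14_general {X : Type*} [MeasurableSpace X] (μ : Measure X)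
    (n : ℕ) (hn : 2 ≤ n) (χ q δ C : ℝ)
    (hχ : χ = (n : ℝ) / ((n : ℝ) - 1)) (hq : 0 < q)
    (hδ : δ ∈ Set.Ioc (0 : ℝ) 1) (hC : 1 ≤ C)
    (qs : ℕ → ℝ) (hqs : ∀ i, qs i = q * χ ^ i)
    (A : ℕ → Set X)
    (Ainf : Set X) (hAinf : ∀ i, Ainf ⊆ A i)
    (f : X → ℝ) (hf : Measurable f)
    (hiter : ∀ i,
      (∫⁻ x in A (i + 1), ENNReal.ofReal (f x) ^ qs (i + 1) ∂μ) ^ (1 / qs (i + 1)) ≤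
        ENNReal.ofReal ((2 ^ i * C * qs i ^ 2 * δ⁻¹) ^ (1 / qs i)) *
          (∫⁻ x in A i, ENNReal.ofReal (f x) ^ qs i ∂μ) ^ (1 / qs i)) :
    Summable (fun i => (1 / qs i) * Real.log (2 ^ i * C * qs i ^ 2)) ∧
    (∑' i, 1 / qs i) = (n : ℝ) / q ∧
    essSup (fun x => ENNReal.ofReal (f x)) (μ.restrict Ainf) ≤
      ENNReal.ofReal (Real.exp (∑' i, (1 / qs i) * Real.log (2 ^ i * C * qs i ^ 2))) *
        ENNReal.ofReal (δ ^ (-(n : ℝ) / q)) *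
        (∫⁻ x in A 0, ENNReal.ofReal (f x) ^ q ∂μ) ^ (1 / q) := by
  obtain ⟨hδ0, -⟩ := hδ
  have hn1 : (1 : ℝ) < n := by exact_mod_cast hn
  have hχ1 : 1 < χ := by rw [hχ, one_lt_div (by linarith)]; linarith
  have hχ0 : 0 < χ := by linarith
  have hC0 : 0 < C := by linarith
  obtain rfl : qs = fun i => q * χ ^ i := funext hqs
  beta_reduce at hiter ⊢
  have hqs_pos : ∀ i : ℕ, 0 < q * χ ^ i := fun i => by positivity
  have hinv : HasSum (fun i : ℕ => 1 / (q * χ ^ i)) (n / q) := by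
    convert hasSum_one_div_mul_pow q hχ1 using 1
    have hn0 : (n : ℝ) - 1 ≠ 0 := by linarith
    rw [hχ, show (n : ℝ) / (n - 1) - 1 = 1 / (n - 1) by field_simp; ring]
    field_simp
  have hlog := summable_one_div_mul_pow_mul_log hq hχ1 two_pos hC0
  refine ⟨hlog, hinv.tsum_eq, ?_⟩
  have hprod := ENNReal.tendsto_prod_range_ofReal_rpow_mul_inv
    (fun i => by positivity : ∀ i : ℕ, 0 < 2 ^ i * C * (q * χ ^ i) ^ 2) hlog.hasSum hinv hδ0
  rw [neg_div]
  calc essSup (fun x => ENNReal.ofReal (f x)) (μ.restrict Ainf)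
      ≤ liminf (fun k => (∫⁻ x in Ainf, ENNReal.ofReal (f x) ^ (q * χ ^ k) ∂μ) ^
          (1 / (q * χ ^ k))) atTop :=
        essSup_le_liminf_lintegral_rpow hf.ennreal_ofReal.aemeasurable hqs_pos
          hinv.summable.tendsto_atTop_zero
    _ ≤ liminf (fun k => (∫⁻ x in A k, ENNReal.ofReal (f x) ^ (q * χ ^ k) ∂μ) ^
          (1 / (q * χ ^ k))) atTop :=
        liminf_le_liminf (.of_forall fun k => ENNReal.rpow_le_rpow (lintegral_mono_set (hAinf k))
          (one_div_nonneg.2 (hqs_pos k).le))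
    _ ≤ liminf (fun k => (∏ i ∈ range k,
          ENNReal.ofReal ((2 ^ i * C * (q * χ ^ i) ^ 2 * δ⁻¹) ^ (1 / (q * χ ^ i)))) *
          (∫⁻ x in A 0, ENNReal.ofReal (f x) ^ q ∂μ) ^ (1 / q)) atTop :=
        liminf_le_liminf (.of_forall fun k => by
          simpa only [pow_zero, mul_one] using ENNReal.le_prod_range_mul_of_le_mul
            (L := fun k => (∫⁻ x in A k, ENNReal.ofReal (f x) ^ (q * χ ^ k) ∂μ) ^ (1 / (q * χ ^ k)))
            hiter k)
    _ = _ := (ENNReal.Tendsto.mul_const hprod (.inl (mul_ne_zero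
          (ENNReal.ofReal_pos.2 (Real.exp_pos _)).ne'
          (ENNReal.ofReal_pos.2 (Real.rpow_pos_of_pos hδ0 _)).ne'))).liminf_eq

/-- Abstract Nash–Moser iteration with nested domains: with exponents `q_i = q·χ^i`,
`χ = n/(n−1)`, a decreasing family of sets `A_i` of finite initial measure, a set
`A∞ ⊆ ∩ A_i`, and iterative bounds
`‖f·1_{A_{i+1}}‖_{L^{q_{i+1}}} ≤ (2^i C q_i² δ⁻¹)^{1/q_i} ‖f·1_{A_i}‖_{L^{q_i}}`,
the series `Σ q_i⁻¹ log(2^i C q_i²)` converges, `Σ q_i⁻¹ = n/q`, and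
`ess sup_{A∞} f ≤ C′ · δ^{−n/q} · ‖f·1_{A_0}‖_{L^q}` with
`C′ = exp(Σ_i q_i⁻¹ log(2^i C q_i²))`. -/
theorem stmt_14 {X : Type*} [MeasurableSpace X] (μ : Measure X)
    (n : ℕ) (hn : 2 ≤ n) (χ q δ C : ℝ)
    (hχ : χ = (n : ℝ) / ((n : ℝ) - 1)) (hq : 0 < q)
    (hδ : δ ∈ Set.Ioc (0 : ℝ) 1) (hC : 1 ≤ C)
    (qs : ℕ → ℝ) (hqs : ∀ i, qs i = q * χ ^ i)
    (A : ℕ → Set X) (hAmeas : ∀ i, MeasurableSet (A i))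
    (hAdec : ∀ i, A (i + 1) ⊆ A i) (hA0 : μ (A 0) < ⊤)
    (Ainf : Set X) (hAinfMeas : MeasurableSet Ainf) (hAinf : ∀ i, Ainf ⊆ A i)
    (f : X → ℝ) (hf : Measurable f) (hf0 : ∀ x, 0 ≤ f x)
    (hfq : (∫⁻ x in A 0, ENNReal.ofReal (f x) ^ q ∂μ) < ⊤)
    (hiter : ∀ i,
      (∫⁻ x in A (i + 1), ENNReal.ofReal (f x) ^ qs (i + 1) ∂μ) ^ (1 / qs (i + 1)) ≤
        ENNReal.ofReal ((2 ^ i * C * qs i ^ 2 * δ⁻¹) ^ (1 / qs i)) *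
          (∫⁻ x in A i, ENNReal.ofReal (f x) ^ qs i ∂μ) ^ (1 / qs i)) :
    Summable (fun i => (1 / qs i) * Real.log (2 ^ i * C * qs i ^ 2)) ∧
    (∑' i, 1 / qs i) = (n : ℝ) / q ∧
    essSup (fun x => ENNReal.ofReal (f x)) (μ.restrict Ainf) ≤
      ENNReal.ofReal (Real.exp (∑' i, (1 / qs i) * Real.log (2 ^ i * C * qs i ^ 2))) *
        ENNReal.ofReal (δ ^ (-(n : ℝ) / q)) *
        (∫⁻ x in A 0, ENNReal.ofReal (f x) ^ q ∂μ) ^ (1 / q) :=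
  stmt_14_general μ n hn χ q δ C hχ hq hδ hC qs hqs A Ainf hAinf f hf hiter
end

section
/- Let n ≥ 1, q ≥ 0, δ ∈ (0, 1], and C ≥ 1. Let (X, μ) be a measure space with μ(X) ≤ δⁿ, and let f : X → [0, ∞) be measurable with f ∈ L^{q+4}(μ). If ∫ f^{q+4} dμ ≤ C·δ^{−2}·∫ (f^{q+2} + f^{q+1} + f^q) dμ, then (∫ f^{q+4} dμ)^{1/(q+4)} ≤ 3C·δ^{n/(q+4) − 1}. -/
/-!
Write `a = ‖f‖_{q+4}` and `b = δ^{n/(q+4) - 1}`. On a space of mass at most `δⁿ`, Hölder's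
inequality bounds each lower moment by `∫ f^p ≤ a^p δ^{n(q+4-p)/(q+4)}`, and since `δ ≤ 1` and
`q + 4 - p ≥ 2` the factor `δ⁻²` can be absorbed, turning the hypothesis into
`a^{q+4} ≤ C (a^{q+2} b² + a^{q+1} b³ + a^q b⁴)`. If `a > 3Cb`, each term on the right is at most
`a^{q+4}/9`, `a^{q+4}/27`, `a^{q+4}/81` respectively, which is absurd.
-/

open MeasureTheory
open scoped ENNReal

theorem rpow_neg_two_mul_rpow_le_pow {δ r : ℝ} (hδ0 : 0 < δ) (hδ1 : δ ≤ 1) (n : ℕ) {k : ℕ}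
    (hk : 2 ≤ k) : δ ^ (-2 : ℝ) * (δ ^ n) ^ ((k : ℝ) / r) ≤ (δ ^ ((n : ℝ) / r - 1)) ^ k := by
  rw [← Real.rpow_natCast δ n, ← Real.rpow_mul hδ0.le, ← Real.rpow_add hδ0,
    ← Real.rpow_mul_natCast hδ0.le]
  apply Real.rpow_le_rpow_of_exponent_ge hδ0 hδ1
  have hk' : (2 : ℝ) ≤ k := by exact_mod_cast hk
  have : ((n : ℝ) / r - 1) * k = n * (k / r) - k := by ring
  linarith

theorem le_three_mul_of_pow_four_le {a b C : ℝ} (hb : 0 ≤ b) (hC : 1 ≤ C)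
    (h : a ^ 4 ≤ C * (a ^ 2 * b ^ 2 + a * b ^ 3 + b ^ 4)) : a ≤ 3 * C * b := by
  by_contra! hlt
  have ha : 0 < a := lt_of_le_of_lt (by positivity) hlt
  have hCb : C * b < a / 3 := by linarith
  have hb3 : b < a / 3 := (le_mul_of_one_le_left hb hC).trans_lt hCb
  have h2 : C * b * b ≤ a / 3 * (a / 3) := mul_le_mul hCb.le hb3.le hb (by positivity)
  have h3 : C * b * b * b ≤ a / 3 * (a / 3) * (a / 3) := mul_le_mul h2 hb3.le hb (by positivity)
  have h4 : C * b * b * b * b ≤ a / 3 * (a / 3) * (a / 3) * (a / 3) :=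
    mul_le_mul h3 hb3.le hb (by positivity)
  nlinarith [pow_pos ha 4, mul_le_mul_of_nonneg_left h2 (sq_nonneg a),
    mul_le_mul_of_nonneg_left h3 ha.le]

theorem le_three_mul_of_rpow_le {a b C q : ℝ} (ha : 0 ≤ a) (hb : 0 ≤ b) (hC : 1 ≤ C)
    (h : a ^ (q + 4) ≤ C * (a ^ (q + 2) * b ^ 2 + a ^ (q + 1) * b ^ 3 + a ^ q * b ^ 4)) :
    a ≤ 3 * C * b := by
  rcases ha.eq_or_lt with rfl | ha
  · positivity
  have hpow (m : ℕ) : a ^ (q + m) = a ^ q * a ^ m := Real.rpow_add_natCast ha.ne' q m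
  have h' : a ^ q * a ^ 4 ≤ a ^ q * (C * (a ^ 2 * b ^ 2 + a * b ^ 3 + b ^ 4)) := by
    have h4 : a ^ (q + 4) = a ^ q * a ^ 4 := by exact_mod_cast hpow 4
    have h2 : a ^ (q + 2) = a ^ q * a ^ 2 := by exact_mod_cast hpow 2
    have h1 : a ^ (q + 1) = a ^ q * a := by simpa using hpow 1
    rw [h4, h2, h1] at h
    linarith
  exact le_three_mul_of_pow_four_le hb hC (le_of_mul_le_mul_left h' (by positivity))

section

variable {X : Type*} [MeasurableSpace X] {μ : Measure X} {g : X → ℝ≥0∞}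

theorem lintegral_rpow_le_lintegral_rpow_mul_measure_univ (hg : AEMeasurable g μ) {p r : ℝ}
    (hp : 0 ≤ p) (hpr : p ≤ r) :
    ∫⁻ x, g x ^ p ∂μ ≤ (∫⁻ x, g x ^ r ∂μ) ^ (p / r) * μ Set.univ ^ (1 - p / r) := by
  rcases hp.eq_or_lt with rfl | hp
  · simp [lintegral_const]
  have hr : 0 < r := hp.trans_le hpr
  have h := eLpNorm'_le_eLpNorm'_mul_rpow_measure_univ hp hpr hg.aestronglyMeasurable
  simp only [eLpNorm'_eq_lintegral_enorm, enorm_eq_self] at h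
  calc ∫⁻ x, g x ^ p ∂μ = ((∫⁻ x, g x ^ p ∂μ) ^ (1 / p)) ^ p := by
        rw [← ENNReal.rpow_mul, one_div_mul_cancel hp.ne', ENNReal.rpow_one]
    _ ≤ ((∫⁻ x, g x ^ r ∂μ) ^ (1 / r) * μ Set.univ ^ (1 / p - 1 / r)) ^ p := by gcongr
    _ = (∫⁻ x, g x ^ r ∂μ) ^ (p / r) * μ Set.univ ^ (1 - p / r) := by
        rw [ENNReal.mul_rpow_of_nonneg _ _ hp.le, ← ENNReal.rpow_mul, ← ENNReal.rpow_mul]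
        congr 2 <;> field_simp

theorem lintegral_rpow_le_ofReal_of_measure_univ_le (hg : AEMeasurable g μ) {p r a M : ℝ}
    (hp : 0 ≤ p) (hpr : p ≤ r) (hr : 0 < r) (ha : 0 ≤ a) (hM : 0 ≤ M)
    (hgr : ∫⁻ x, g x ^ r ∂μ = ENNReal.ofReal (a ^ r)) (hμ : μ Set.univ ≤ ENNReal.ofReal M) :
    ∫⁻ x, g x ^ p ∂μ ≤ ENNReal.ofReal (a ^ p * M ^ ((r - p) / r)) := by
  have hpr' : 0 ≤ 1 - p / r := by rw [sub_nonneg, div_le_one hr]; exact hpr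
  calc ∫⁻ x, g x ^ p ∂μ ≤ (∫⁻ x, g x ^ r ∂μ) ^ (p / r) * μ Set.univ ^ (1 - p / r) :=
        lintegral_rpow_le_lintegral_rpow_mul_measure_univ hg hp hpr
    _ ≤ ENNReal.ofReal (a ^ r) ^ (p / r) * ENNReal.ofReal M ^ (1 - p / r) := by
        rw [hgr]; gcongr
    _ = ENNReal.ofReal (a ^ p * M ^ ((r - p) / r)) := by
        rw [ENNReal.ofReal_rpow_of_nonneg (by positivity) (by positivity),
          ENNReal.ofReal_rpow_of_nonneg hM hpr', ← ENNReal.ofReal_mul (by positivity),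
          ← Real.rpow_mul ha, mul_div_cancel₀ _ hr.ne', one_sub_div hr.ne']

variable {δ a : ℝ} {n : ℕ}

theorem ofReal_rpow_neg_two_mul_lintegral_rpow_le (hg : AEMeasurable g μ)
    (hμ : μ Set.univ ≤ ENNReal.ofReal (δ ^ n)) (hδ0 : 0 < δ) (hδ1 : δ ≤ 1) (ha : 0 ≤ a)
    {p r : ℝ} {k : ℕ} (hgr : ∫⁻ x, g x ^ r ∂μ = ENNReal.ofReal (a ^ r)) (hp : 0 ≤ p)
    (hpk : p + k = r) (hk : 2 ≤ k) :
    ENNReal.ofReal (δ ^ (-2 : ℝ)) * ∫⁻ x, g x ^ p ∂μ ≤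
      ENNReal.ofReal (a ^ p * (δ ^ ((n : ℝ) / r - 1)) ^ k) := by
  have hk' : (2 : ℝ) ≤ k := by exact_mod_cast hk
  have hholder := lintegral_rpow_le_ofReal_of_measure_univ_le hg hp (by linarith)
    (by linarith) ha (by positivity) hgr hμ
  rw [show r - p = k by linarith] at hholder
  calc ENNReal.ofReal (δ ^ (-2 : ℝ)) * ∫⁻ x, g x ^ p ∂μ
      ≤ ENNReal.ofReal (δ ^ (-2 : ℝ)) * ENNReal.ofReal (a ^ p * (δ ^ n) ^ ((k : ℝ) / r)) := by
        gcongr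
    _ = ENNReal.ofReal (a ^ p * (δ ^ (-2 : ℝ) * (δ ^ n) ^ ((k : ℝ) / r))) := by
        rw [← ENNReal.ofReal_mul (by positivity)]; ring_nf
    _ ≤ ENNReal.ofReal (a ^ p * (δ ^ ((n : ℝ) / r - 1)) ^ k) := by
        gcongr; exact rpow_neg_two_mul_rpow_le_pow hδ0 hδ1 n hk

theorem rpow_le_of_lintegral_rpow_le (hg : AEMeasurable g μ)
    (hμ : μ Set.univ ≤ ENNReal.ofReal (δ ^ n)) (hδ0 : 0 < δ) (hδ1 : δ ≤ 1) (ha : 0 ≤ a)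
    {q C : ℝ} (hq : 0 ≤ q) (hC : 0 ≤ C)
    (hgr : ∫⁻ x, g x ^ (q + 4) ∂μ = ENNReal.ofReal (a ^ (q + 4)))
    (hineq : ∫⁻ x, g x ^ (q + 4) ∂μ ≤ ENNReal.ofReal (C * δ ^ (-2 : ℝ)) *
      ∫⁻ x, (g x ^ (q + 2) + g x ^ (q + 1) + g x ^ q) ∂μ) :
    a ^ (q + 4) ≤ C * (a ^ (q + 2) * (δ ^ ((n : ℝ) / (q + 4) - 1)) ^ 2 +
      a ^ (q + 1) * (δ ^ ((n : ℝ) / (q + 4) - 1)) ^ 3 +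
      a ^ q * (δ ^ ((n : ℝ) / (q + 4) - 1)) ^ 4) := by
  have hterm (p : ℝ) (k : ℕ) (hpk : p + k = q + 4) (hk : 2 ≤ k) (hp : 0 ≤ p) :=
    ofReal_rpow_neg_two_mul_lintegral_rpow_le hg hμ hδ0 hδ1 ha hgr hp hpk hk
  set b := δ ^ ((n : ℝ) / (q + 4) - 1)
  rw [lintegral_add_left' (f := fun x ↦ g x ^ (q + 2) + g x ^ (q + 1))
    ((hg.pow_const _).add (hg.pow_const _)), lintegral_add_left' (hg.pow_const _),
    ENNReal.ofReal_mul hC, mul_assoc, mul_add (ENNReal.ofReal (δ ^ (-2 : ℝ))),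
    mul_add (ENNReal.ofReal (δ ^ (-2 : ℝ)))] at hineq
  rw [← ENNReal.ofReal_le_ofReal_iff (by positivity), ← hgr]
  calc ∫⁻ x, g x ^ (q + 4) ∂μ
      ≤ ENNReal.ofReal C * (ENNReal.ofReal (δ ^ (-2 : ℝ)) * ∫⁻ x, g x ^ (q + 2) ∂μ +
          ENNReal.ofReal (δ ^ (-2 : ℝ)) * ∫⁻ x, g x ^ (q + 1) ∂μ +
          ENNReal.ofReal (δ ^ (-2 : ℝ)) * ∫⁻ x, g x ^ q ∂μ) := hineq
    _ ≤ ENNReal.ofReal C * (ENNReal.ofReal (a ^ (q + 2) * b ^ 2) +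
          ENNReal.ofReal (a ^ (q + 1) * b ^ 3) + ENNReal.ofReal (a ^ q * b ^ 4)) := by
        gcongr
        · exact hterm _ 2 (by push_cast; ring) le_rfl (by linarith)
        · exact hterm _ 3 (by push_cast; ring) (by norm_num) (by linarith)
        · exact hterm _ 4 (by push_cast; ring) (by norm_num) hq
    _ = ENNReal.ofReal (C * (a ^ (q + 2) * b ^ 2 + a ^ (q + 1) * b ^ 3 + a ^ q * b ^ 4)) := by
        rw [← ENNReal.ofReal_add (by positivity) (by positivity),
          ← ENNReal.ofReal_add (by positivity) (by positivity), ← ENNReal.ofReal_mul hC]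

end

theorem stmt_15_general {X : Type*} [MeasurableSpace X] (μ : Measure X)
    (n : ℕ) (q δ C : ℝ) (hq : 0 ≤ q)
    (hδ : δ ∈ Set.Ioc (0 : ℝ) 1) (hC : 1 ≤ C)
    (hμ : μ Set.univ ≤ ENNReal.ofReal (δ ^ n))
    (f : X → ℝ) (hf : Measurable f)
    (hmem : (∫⁻ x, ENNReal.ofReal (f x) ^ (q + 4) ∂μ) < ⊤)
    (hineq : (∫⁻ x, ENNReal.ofReal (f x) ^ (q + 4) ∂μ) ≤
        ENNReal.ofReal (C * δ ^ (-2 : ℝ)) *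
          ∫⁻ x, (ENNReal.ofReal (f x) ^ (q + 2) + ENNReal.ofReal (f x) ^ (q + 1) +
            ENNReal.ofReal (f x) ^ q) ∂μ) :
    (∫⁻ x, ENNReal.ofReal (f x) ^ (q + 4) ∂μ) ^ (1 / (q + 4)) ≤
      ENNReal.ofReal (3 * C * δ ^ ((n : ℝ) / (q + 4) - 1)) := by
  obtain ⟨hδ0, hδ1⟩ := hδ
  have hr : 0 < q + 4 := by linarith
  set I := ∫⁻ x, ENNReal.ofReal (f x) ^ (q + 4) ∂μ
  set a := I.toReal ^ (1 / (q + 4))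
  have ha : 0 ≤ a := by positivity
  have hI : I = ENNReal.ofReal (a ^ (q + 4)) := by
    rw [← Real.rpow_mul ENNReal.toReal_nonneg, one_div_mul_cancel hr.ne', Real.rpow_one,
      ENNReal.ofReal_toReal hmem.ne]
  have hbound := rpow_le_of_lintegral_rpow_le hf.ennreal_ofReal.aemeasurable hμ hδ0 hδ1 ha hq
    (by linarith) hI hineq
  rw [hI, ENNReal.ofReal_rpow_of_nonneg (by positivity) (by positivity), ← Real.rpow_mul ha,
    mul_one_div_cancel hr.ne', Real.rpow_one]
  exact ENNReal.ofReal_le_ofReal (le_three_mul_of_rpow_le ha (by positivity) hC hbound)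

/-- Hölder–absorption step: on a measure space of total mass at most `δⁿ`, if a nonnegative
function `f ∈ L^{q+4}` satisfies `∫ f^{q+4} ≤ C δ⁻² ∫ (f^{q+2} + f^{q+1} + f^q)`, then
`(∫ f^{q+4})^{1/(q+4)} ≤ 3C δ^{n/(q+4) − 1}`. -/
theorem stmt_15 {X : Type*} [MeasurableSpace X] (μ : Measure X)
    (n : ℕ) (hn : 1 ≤ n) (q δ C : ℝ) (hq : 0 ≤ q)
    (hδ : δ ∈ Set.Ioc (0 : ℝ) 1) (hC : 1 ≤ C)
    (hμ : μ Set.univ ≤ ENNReal.ofReal (δ ^ n))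
    (f : X → ℝ) (hf : Measurable f) (hf0 : ∀ x, 0 ≤ f x)
    (hmem : (∫⁻ x, ENNReal.ofReal (f x) ^ (q + 4) ∂μ) < ⊤)
    (hineq : (∫⁻ x, ENNReal.ofReal (f x) ^ (q + 4) ∂μ) ≤
        ENNReal.ofReal (C * δ ^ (-2 : ℝ)) *
          ∫⁻ x, (ENNReal.ofReal (f x) ^ (q + 2) + ENNReal.ofReal (f x) ^ (q + 1) +
            ENNReal.ofReal (f x) ^ q) ∂μ) :
    (∫⁻ x, ENNReal.ofReal (f x) ^ (q + 4) ∂μ) ^ (1 / (q + 4)) ≤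
      ENNReal.ofReal (3 * C * δ ^ ((n : ℝ) / (q + 4) - 1)) :=
  stmt_15_general μ n q δ C hq hδ hC hμ f hf hmem hineq
end
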